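/- arXiv:2210.08938 — 2 statements merged into one kernel-verified Lean document; each statement's English description precedes it below -/
import Mathlib

section
/- Let G be a group, K a subgroup of G, C a subgroup of K, and φ : C → K a group monomorphism. Let L = K∗_φ be the HNN extension of K along φ, with stable letter t, and regard K as a subgroup of both G and L. Then there is an isomorphism between the HNN extension G∗_φ = ⟨G, t | tct⁻¹ = φ(c) for all c ∈ C⟩ and the amalgamated product G ∗_K L (amalgamated over K via the inclusions K ≤ G and K ≤ L) which restricts to the identity on G and sends the stable letter of G∗_φ to the stable letter of L. -/
/-!
Both groups are presented by the generators of `G` together with one letter `t`, subject to the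
relations of `G` and `t c t⁻¹ = φ c` for `c ∈ C`: in `G ∗_K L` the relations of `L = K∗_φ` other
than those involving `t` are already relations of `K ≤ G`. Accordingly the isomorphism and its
inverse are built from the universal properties of HNN extensions and amalgamated products, and
checked to be mutually inverse on generators.
-/

open Monoid

/-! ### The amalgamated product of two groups -/

/-- The amalgamated product `G₁ ∗_C G₂` determined by `G₁ ←f₁− C −f₂→ G₂`: the quotient of
the free product `G₁ ∗ G₂` by the normal closure of the elements `f₁ c · (f₂ c)⁻¹`. -/
abbrev Amal {C G₁ G₂ : Type*} [Group C] [Group G₁] [Group G₂]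
    (f₁ : C →* G₁) (f₂ : C →* G₂) : Type _ :=
  Coprod G₁ G₂ ⧸ Subgroup.normalClosure
    {x : Coprod G₁ G₂ | ∃ c : C, x = Coprod.inl (f₁ c) * (Coprod.inr (f₂ c))⁻¹}

/-- The canonical homomorphism `G₁ →* G₁ ∗_C G₂`. -/
def Amal.inl {C G₁ G₂ : Type*} [Group C] [Group G₁] [Group G₂]
    (f₁ : C →* G₁) (f₂ : C →* G₂) : G₁ →* Amal f₁ f₂ :=
  (QuotientGroup.mk' _).comp Coprod.inl

/-- The canonical homomorphism `G₂ →* G₁ ∗_C G₂`. -/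
def Amal.inr {C G₁ G₂ : Type*} [Group C] [Group G₁] [Group G₂]
    (f₁ : C →* G₁) (f₂ : C →* G₂) : G₂ →* Amal f₁ f₂ :=
  (QuotientGroup.mk' _).comp Coprod.inr

namespace Amal

variable {C G₁ G₂ M : Type*} [Group C] [Group G₁] [Group G₂] [Group M]
  {f₁ : C →* G₁} {f₂ : C →* G₂}

variable (f₁ f₂) in
theorem inl_eq_inr (c : C) : inl f₁ f₂ (f₁ c) = inr f₁ f₂ (f₂ c) :=
  (QuotientGroup.eq_iff_div_mem).2 <| Subgroup.subset_normalClosure ⟨c, div_eq_mul_inv _ _⟩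

def lift (g₁ : G₁ →* M) (g₂ : G₂ →* M) (h : ∀ c, g₁ (f₁ c) = g₂ (f₂ c)) : Amal f₁ f₂ →* M :=
  QuotientGroup.lift _ (Coprod.lift g₁ g₂) <| Subgroup.normalClosure_le_normal <| by
    rintro _ ⟨c, rfl⟩
    simp [h]

@[simp]
theorem lift_inl (g₁ : G₁ →* M) (g₂ : G₂ →* M) (h : ∀ c, g₁ (f₁ c) = g₂ (f₂ c)) (x : G₁) :
    lift g₁ g₂ h (inl f₁ f₂ x) = g₁ x :=
  rfl

@[simp]
theorem lift_inr (g₁ : G₁ →* M) (g₂ : G₂ →* M) (h : ∀ c, g₁ (f₁ c) = g₂ (f₂ c)) (x : G₂) :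
    lift g₁ g₂ h (inr f₁ f₂ x) = g₂ x :=
  rfl

theorem hom_ext {ψ χ : Amal f₁ f₂ →* M} (h₁ : ψ.comp (inl f₁ f₂) = χ.comp (inl f₁ f₂))
    (h₂ : ψ.comp (inr f₁ f₂) = χ.comp (inr f₁ f₂)) : ψ = χ :=
  QuotientGroup.monoidHom_ext _ (Coprod.hom_ext h₁ h₂)

end Amal

namespace HNNExtension

variable {G : Type*} [Group G] {K A B : Subgroup G} (hAK : A ≤ K) {e : A ≃* B}
  {B₀ : Subgroup K} {e₀ : A.subgroupOf K ≃* B₀}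

theorem amal_inr_t_mul_inl
    (he : ∀ a, ((e₀ a : K) : G) = e (A.subgroupOfEquivOfLe hAK a)) (a : A) :
    Amal.inr K.subtype (of (φ := e₀)) t * Amal.inl K.subtype (of (φ := e₀)) (a : G) =
      Amal.inl K.subtype (of (φ := e₀)) (e a : G) * Amal.inr K.subtype (of (φ := e₀)) t := by
  obtain ⟨a₀, rfl⟩ := (A.subgroupOfEquivOfLe hAK).surjective a
  have h₁ : Amal.inl K.subtype (of (φ := e₀)) (A.subgroupOfEquivOfLe hAK a₀ : G) =
      Amal.inr K.subtype of (of (a₀ : K)) :=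
    Amal.inl_eq_inr _ _ (a₀ : K)
  have h₂ : Amal.inl K.subtype (of (φ := e₀)) (e (A.subgroupOfEquivOfLe hAK a₀) : G) =
      Amal.inr K.subtype of (of (e₀ a₀ : K)) := by
    rw [← he]
    exact Amal.inl_eq_inr _ _ (e₀ a₀ : K)
  rw [h₁, h₂, ← map_mul, ← map_mul, t_mul_of]

theorem t_mul_of_subtype
    (he : ∀ a, ((e₀ a : K) : G) = e (A.subgroupOfEquivOfLe hAK a)) (a₀ : A.subgroupOf K) :
    t * (of (φ := e)).comp K.subtype a₀ = (of (φ := e)).comp K.subtype (e₀ a₀ : K) * t := by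
  simpa [he] using t_mul_of (φ := e) (A.subgroupOfEquivOfLe hAK a₀)

variable (he : ∀ a, ((e₀ a : K) : G) = e (A.subgroupOfEquivOfLe hAK a))

def mapSubgroup : HNNExtension K (A.subgroupOf K) B₀ e₀ →* HNNExtension G A B e :=
  lift ((of (φ := e)).comp K.subtype) t (t_mul_of_subtype hAK he)

@[simp] theorem mapSubgroup_of (k : K) : mapSubgroup hAK he (of k) = of (k : G) := lift_of ..

@[simp] theorem mapSubgroup_t : mapSubgroup hAK he t = t := lift_t ..

def toAmal : HNNExtension G A B e →* Amal K.subtype (of (φ := e₀)) :=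
  lift (Amal.inl _ _) (Amal.inr _ _ t) (amal_inr_t_mul_inl hAK he)

@[simp] theorem toAmal_of (g : G) : toAmal hAK he (of g) = Amal.inl _ _ g := lift_of ..

@[simp] theorem toAmal_t : toAmal hAK he t = Amal.inr _ _ t := lift_t ..

def ofAmal : Amal K.subtype (of (φ := e₀)) →* HNNExtension G A B e :=
  Amal.lift of (mapSubgroup hAK he) fun k => by rw [mapSubgroup_of, Subgroup.coe_subtype]

theorem ofAmal_comp_toAmal : (ofAmal hAK he).comp (toAmal hAK he) = MonoidHom.id _ :=
  hom_ext (by ext; simp [ofAmal]) (by simp [ofAmal])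

theorem toAmal_comp_ofAmal : (toAmal hAK he).comp (ofAmal hAK he) = MonoidHom.id _ :=
  Amal.hom_ext (by ext; simp [ofAmal])
    (hom_ext (by ext k; simpa [ofAmal] using Amal.inl_eq_inr K.subtype of k)
      (by simp [ofAmal]))

def equivAmal : HNNExtension G A B e ≃* Amal K.subtype (of (φ := e₀)) :=
  (toAmal hAK he).toMulEquiv (ofAmal hAK he) (ofAmal_comp_toAmal hAK he)
    (toAmal_comp_ofAmal hAK he)

end HNNExtension

theorem hnn_iso_amalgam_of_hnn_of_subgroup_general
    {G : Type*} [Group G] (K C : Subgroup G) (hCK : C ≤ K)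
    (φ : ↥C →* G) (hφ : Function.Injective φ)
    -- `φ'` is `φ` viewed as a map from `C`, regarded as a subgroup of `K`, to `K`:
    (φ' : ↥(C.subgroupOf K) →* ↥K)
    (hφ' : ∀ c : ↥(C.subgroupOf K), (φ' c : G) = φ ((Subgroup.subgroupOfEquivOfLe hCK) c))
    (hφ'inj : Function.Injective φ') :
    ∃ e : HNNExtension G C φ.range (MonoidHom.ofInjective hφ) ≃*
      Amal K.subtype
        (HNNExtension.of :
          ↥K →* HNNExtension ↥K (C.subgroupOf K) φ'.range (MonoidHom.ofInjective hφ'inj)),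
      (∀ g : G, e (HNNExtension.of g) =
        Amal.inl K.subtype
          (HNNExtension.of :
            ↥K →* HNNExtension ↥K (C.subgroupOf K) φ'.range (MonoidHom.ofInjective hφ'inj)) g) ∧
      e HNNExtension.t =
        Amal.inr K.subtype
          (HNNExtension.of :
            ↥K →* HNNExtension ↥K (C.subgroupOf K) φ'.range (MonoidHom.ofInjective hφ'inj))
          HNNExtension.t := by
  have he : ∀ c, ((MonoidHom.ofInjective hφ'inj c : K) : G) =
      MonoidHom.ofInjective hφ (C.subgroupOfEquivOfLe hCK c) := hφ'
  exact ⟨HNNExtension.equivAmal hCK he, HNNExtension.toAmal_of hCK he,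
    HNNExtension.toAmal_t hCK he⟩

/-- Let `K ≤ G`, `C ≤ K` and let `φ : C → K` be a monomorphism.  Let
`L = K∗_φ` be the HNN extension of `K` along `φ` with stable letter `t`.  Then there is an
isomorphism between the HNN extension `G∗_φ = ⟨G, t ∣ t c t⁻¹ = φ(c)⟩` and the amalgamated
product `G ∗_K L` (amalgamated over `K` via the inclusions `K ≤ G` and `K ≤ L`) which
restricts to the identity on `G` and sends the stable letter of `G∗_φ` to the stable
letter of `L`. -/
theorem hnn_iso_amalgam_of_hnn_of_subgroup
    {G : Type*} [Group G] (K C : Subgroup G) (hCK : C ≤ K)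
    (φ : ↥C →* G) (hφ : Function.Injective φ) (hφK : φ.range ≤ K)
    -- `φ'` is `φ` viewed as a map from `C`, regarded as a subgroup of `K`, to `K`:
    (φ' : ↥(C.subgroupOf K) →* ↥K)
    (hφ' : ∀ c : ↥(C.subgroupOf K), (φ' c : G) = φ ((Subgroup.subgroupOfEquivOfLe hCK) c))
    (hφ'inj : Function.Injective φ') :
    ∃ e : HNNExtension G C φ.range (MonoidHom.ofInjective hφ) ≃*
      Amal K.subtype
        (HNNExtension.of :
          ↥K →* HNNExtension ↥K (C.subgroupOf K) φ'.range (MonoidHom.ofInjective hφ'inj)),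
      (∀ g : G, e (HNNExtension.of g) =
        Amal.inl K.subtype
          (HNNExtension.of :
            ↥K →* HNNExtension ↥K (C.subgroupOf K) φ'.range (MonoidHom.ofInjective hφ'inj)) g) ∧
      e HNNExtension.t =
        Amal.inr K.subtype
          (HNNExtension.of :
            ↥K →* HNNExtension ↥K (C.subgroupOf K) φ'.range (MonoidHom.ofInjective hφ'inj))
          HNNExtension.t :=
  hnn_iso_amalgam_of_hnn_of_subgroup_general K C hCK φ hφ φ' hφ' hφ'inj
end

section
/- Let H be a subgroup of a group A, let φ : H → A be a group monomorphism, and let G = A∗_φ be the HNN extension with stable letter t. Let X be an A-graph, and let x, y be vertices of X in different A-orbits such that the A-stabilizer of x is H and the A-stabilizer of y is φ(H). Let Z be the φ-coalescence of the G-graph G×_A X with respect to (x,y). If X is a connected graph, then Z is a connected graph. -/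
/-!
Every vertex of `Z` has the form `g • ȷ(s)`, and `ȷ(X)` is connected because `X` is, so it
suffices to join the base point `z = ȷ(y)` to `g • z` for every `g ∈ A∗_φ`. The `g` for which
this holds form a subgroup (the stabilizer of the component of `z`), and it contains the
generators of `A∗_φ`: `a • z = ȷ(a • y)` lies in `ȷ(X)`, while `t • z` is joined inside
`t • ȷ(X)` to `t • ȷ(x)`, which the coalescence identifies with `z`.
-/

/-! ### The induced `G`-set `G ×_A S` along a homomorphism `A →* G` -/

/-- The relation defining `G ×_A S` along `ι : A →* G`: `(g · ι a, s) ~ (g, a • s)`. -/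
def IndRelH {A G : Type*} [Group A] [Group G] (ι : A →* G) (S : Type*) [MulAction A S] :
    G × S → G × S → Prop :=
  fun p q => ∃ a : A, p.1 = q.1 * ι a ∧ q.2 = a • p.2

/-- The induced `G`-set `G ×_A S` along `ι : A →* G`. -/
def IndSetH {A G : Type*} [Group A] [Group G] (ι : A →* G) (S : Type*) [MulAction A S] :
    Type _ :=
  Quot (IndRelH ι S)

/-- The class of a pair `(g, s)` in `G ×_A S`. -/
def IndSetH.mk {A G : Type*} [Group A] [Group G] (ι : A →* G) (S : Type*) [MulAction A S]
    (p : G × S) : IndSetH ι S :=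
  Quot.mk _ p

instance {A G : Type*} [Group A] [Group G] (ι : A →* G) (S : Type*) [MulAction A S] :
    SMul G (IndSetH ι S) :=
  ⟨fun g => Quot.map (fun p => (g * p.1, p.2)) (by
    rintro p q ⟨a, h1, h2⟩
    exact ⟨a, by dsimp only; rw [h1, mul_assoc], h2⟩)⟩

/-- `G` acts on `G ×_A S` by left multiplication on the first factor. -/
instance {A G : Type*} [Group A] [Group G] (ι : A →* G) (S : Type*) [MulAction A S] :
    MulAction G (IndSetH ι S) where
  one_smul := by
    rintro ⟨p⟩
    show IndSetH.mk ι S (1 * p.1, p.2) = IndSetH.mk ι S p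
    rw [one_mul]
  mul_smul g h := by
    rintro ⟨p⟩
    show IndSetH.mk ι S (g * h * p.1, p.2) = IndSetH.mk ι S (g * (h * p.1), p.2)
    rw [mul_assoc]

/-! ### The HNN extension `A∗_φ` of `A` along a monomorphism `φ : H → A` -/

section HNN

variable {A : Type*} [Group A] (H : Subgroup A) (φ : ↥H →* A) (hφ : Function.Injective φ)

/-- The HNN extension `A∗_φ = ⟨A, t ∣ t h t⁻¹ = φ(h) for h ∈ H⟩` of `A` along the
monomorphism `φ : H → A`. -/
noncomputable abbrev HNNGroup : Type _ :=
  HNNExtension A H φ.range (MonoidHom.ofInjective hφ)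

/-! ### The `φ`-coalescence -/

variable (X : Type*) [MulAction A X]

/-- The identifications defining the `φ`-coalescence of `X` with respect to `(x, y)`:
for every `g ∈ G = A∗_φ`, the point `g t • ι x` is glued to `g • ι y` in `G ×_A X`. -/
def CoalRel (x y : X) :
    IndSetH (HNNExtension.of : A →* HNNGroup H φ hφ) X →
    IndSetH (HNNExtension.of : A →* HNNGroup H φ hφ) X → Prop :=
  fun u v => ∃ g : HNNGroup H φ hφ,
    u = IndSetH.mk _ X (g * HNNExtension.t, x) ∧ v = IndSetH.mk _ X (g, y)

/-- The `φ`-coalescence of the `A`-set `X` with respect to `(x, y)`: the quotient of the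
induced `G`-set `G ×_A X` by the relation generated by `g t • ι x ~ g • ι y`. -/
def CoalSet (x y : X) : Type _ :=
  Quot (CoalRel H φ hφ X x y)

/-- The quotient `G`-map `ρ : G ×_A X → Z`. -/
def CoalSet.rho (x y : X)
    (u : IndSetH (HNNExtension.of : A →* HNNGroup H φ hφ) X) : CoalSet H φ hφ X x y :=
  Quot.mk _ u

noncomputable instance (x y : X) : SMul (HNNGroup H φ hφ) (CoalSet H φ hφ X x y) :=
  ⟨fun g => Quot.map (fun u => g • u) (by
    rintro u v ⟨h, rfl, rfl⟩
    refine ⟨g * h, ?_, rfl⟩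
    show IndSetH.mk _ X (g * (h * HNNExtension.t), x) =
      IndSetH.mk _ X (g * h * HNNExtension.t, x)
    rw [mul_assoc])⟩

/-- The group `G = A∗_φ` acts on the `φ`-coalescence. -/
noncomputable instance (x y : X) : MulAction (HNNGroup H φ hφ) (CoalSet H φ hφ X x y) where
  one_smul := by
    rintro ⟨u⟩
    show CoalSet.rho H φ hφ X x y ((1 : HNNGroup H φ hφ) • u) = CoalSet.rho H φ hφ X x y u
    rw [one_smul]
  mul_smul g h := by
    rintro ⟨u⟩
    show CoalSet.rho H φ hφ X x y ((g * h) • u) = CoalSet.rho H φ hφ X x y (g • h • u)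
    rw [mul_smul]

/-- The canonical `A`-map `ȷ : X → Z`, the composition of `ι : X → G ×_A X` with `ρ`. -/
noncomputable def CoalSet.incl (x y : X) (s : X) : CoalSet H φ hφ X x y :=
  CoalSet.rho H φ hφ X x y (IndSetH.mk _ X (1, s))

/-- The distinguished point `z = ρ (ι y)` of the `φ`-coalescence. -/
noncomputable def CoalSet.basePt (x y : X) : CoalSet H φ hφ X x y :=
  CoalSet.incl H φ hφ X x y y

end HNN

/-! ### The `φ`-coalescence of a graph -/

section CoalGraph

variable {A : Type*} [Group A] (H : Subgroup A) (φ : ↥H →* A) (hφ : Function.Injective φ)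
  {VX : Type*} [MulAction A VX]

/-- The adjacency relation of the `φ`-coalescence of an `A`-graph `X`: the edges are the
images of the edges of `G ×_A X` under the quotient map `ρ`. -/
def CoalAdj (X : SimpleGraph VX) (x y : VX) :
    CoalSet H φ hφ VX x y → CoalSet H φ hφ VX x y → Prop :=
  fun u v => ∃ (g : HNNGroup H φ hφ) (a b : VX), X.Adj a b ∧
    u = CoalSet.rho H φ hφ VX x y (IndSetH.mk _ VX (g, a)) ∧
    v = CoalSet.rho H φ hφ VX x y (IndSetH.mk _ VX (g, b))

/-- The `φ`-coalescence of the `A`-graph `X` with respect to `(x, y)`, as a graph. -/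
def CoalGraph (X : SimpleGraph VX) (x y : VX) :
    SimpleGraph (CoalSet H φ hφ VX x y) :=
  SimpleGraph.fromRel (CoalAdj H φ hφ X x y)

end CoalGraph

namespace SimpleGraph

variable {V V' : Type*} {Γ : SimpleGraph V} {Γ' : SimpleGraph V'}

theorem Reachable.lift (f : V → V')
    (hf : ∀ a b, Γ.Adj a b → Γ'.Reachable (f a) (f b)) {u v : V} (h : Γ.Reachable u v) :
    Γ'.Reachable (f u) (f v) := by
  rw [reachable_iff_reflTransGen] at h ⊢
  exact Relation.ReflTransGen.lift' f
    (fun a b hab => (reachable_iff_reflTransGen _ _).1 (hf a b hab)) _ _ h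

theorem reachable_fromRel_of_rel {r : V → V → Prop} {u v : V} (h : r u v) :
    (fromRel r).Reachable u v := by
  by_cases huv : u = v
  · exact huv ▸ Reachable.refl u
  · exact Adj.reachable ⟨huv, Or.inl h⟩

theorem Reachable.smul {G : Type*} [SMul G V]
    (hΓ : ∀ (g : G) (u v : V), Γ.Adj u v → Γ.Adj (g • u) (g • v)) (g : G) {u v : V}
    (h : Γ.Reachable u v) : Γ.Reachable (g • u) (g • v) :=
  h.map ⟨(g • ·), hΓ g _ _⟩

def componentStabilizer {G : Type*} [Group G] [MulAction G V] (Γ : SimpleGraph V)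
    (hΓ : ∀ (g : G) (u v : V), Γ.Adj u v → Γ.Adj (g • u) (g • v)) (v : V) : Subgroup G where
  carrier := {g | Γ.Reachable v (g • v)}
  one_mem' := by simp
  mul_mem' {g h} hg hh := by
    simpa only [Set.mem_ofPred_eq, mul_smul] using hg.trans (hh.smul hΓ g)
  inv_mem' {g} hg := by
    simpa only [Set.mem_ofPred_eq, inv_smul_smul] using (hg.smul hΓ g⁻¹).symm

@[simp]
theorem mem_componentStabilizer {G : Type*} [Group G] [MulAction G V]
    {hΓ : ∀ (g : G) (u v : V), Γ.Adj u v → Γ.Adj (g • u) (g • v)} {v : V} {g : G} :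
    g ∈ Γ.componentStabilizer hΓ v ↔ Γ.Reachable v (g • v) :=
  Iff.rfl

end SimpleGraph

theorem HNNExtension.eq_top_of_of_mem_of_t_mem {G : Type*} [Group G] {A B : Subgroup G}
    {φ : A ≃* B} {S : Subgroup (HNNExtension G A B φ)} (hof : ∀ g, of g ∈ S) (ht : t ∈ S) :
    S = ⊤ :=
  Subgroup.eq_top_iff' S |>.2 fun g =>
    induction_on g hof ht (fun _ _ => S.mul_mem) (fun _ => S.inv_mem)

namespace IndSetH

variable {A G : Type*} [Group A] [Group G] (ι : A →* G) (S : Type*) [MulAction A S]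

@[simp]
theorem smul_mk (g : G) (p : G × S) : g • mk ι S p = mk ι S (g * p.1, p.2) :=
  rfl

theorem mk_mul (g : G) (a : A) (s : S) : mk ι S (g * ι a, s) = mk ι S (g, a • s) :=
  Quot.sound ⟨a, rfl, rfl⟩

theorem exists_smul_mk_one (u : IndSetH ι S) : ∃ (g : G) (s : S), g • mk ι S (1, s) = u := by
  rcases u with ⟨g, s⟩
  exact ⟨g, s, by rw [smul_mk, mul_one]; rfl⟩

end IndSetH

namespace CoalSet

variable {A : Type*} [Group A] (H : Subgroup A) (φ : ↥H →* A) (hφ : Function.Injective φ)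
  {X : Type*} [MulAction A X] (x y : X)

@[simp]
theorem smul_rho (g : HNNGroup H φ hφ) (u : IndSetH HNNExtension.of X) :
    g • rho H φ hφ X x y u = rho H φ hφ X x y (g • u) :=
  rfl

theorem exists_smul_incl (u : CoalSet H φ hφ X x y) :
    ∃ (g : HNNGroup H φ hφ) (s : X), g • incl H φ hφ X x y s = u := by
  rcases u with ⟨u⟩
  obtain ⟨g, s, rfl⟩ := IndSetH.exists_smul_mk_one _ _ u
  exact ⟨g, s, rfl⟩

theorem of_smul_incl (a : A) (s : X) :
    (HNNExtension.of a : HNNGroup H φ hφ) • incl H φ hφ X x y s = incl H φ hφ X x y (a • s) := by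
  simp only [incl, smul_rho, IndSetH.smul_mk]
  rw [mul_one, ← one_mul (HNNExtension.of a), IndSetH.mk_mul]

theorem t_smul_incl :
    (HNNExtension.t : HNNGroup H φ hφ) • incl H φ hφ X x y x = incl H φ hφ X x y y := by
  simp only [incl, smul_rho, IndSetH.smul_mk]
  rw [mul_one, ← one_mul HNNExtension.t]
  exact Quot.sound ⟨1, rfl, rfl⟩

end CoalSet

namespace CoalGraph

variable {A : Type*} [Group A] (H : Subgroup A) (φ : ↥H →* A) (hφ : Function.Injective φ)
  {VX : Type*} [MulAction A VX] (X : SimpleGraph VX) (x y : VX)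

theorem adj_smul (g : HNNGroup H φ hφ) (u v : CoalSet H φ hφ VX x y)
    (h : (CoalGraph H φ hφ X x y).Adj u v) : (CoalGraph H φ hφ X x y).Adj (g • u) (g • v) := by
  obtain ⟨hne, hr⟩ := h
  refine ⟨(MulAction.injective g).ne hne, ?_⟩
  rcases hr with ⟨h, a, b, hab, rfl, rfl⟩ | ⟨h, a, b, hab, rfl, rfl⟩
  · exact Or.inl ⟨g * h, a, b, hab, rfl, rfl⟩
  · exact Or.inr ⟨g * h, a, b, hab, rfl, rfl⟩

theorem reachable_incl {a b : VX} (h : X.Reachable a b) :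
    (CoalGraph H φ hφ X x y).Reachable (CoalSet.incl H φ hφ VX x y a)
      (CoalSet.incl H φ hφ VX x y b) :=
  h.lift _ fun a b hab =>
    SimpleGraph.reachable_fromRel_of_rel ⟨1, a, b, hab, rfl, rfl⟩

theorem reachable_basePt_smul_basePt (hX : X.Preconnected) (g : HNNGroup H φ hφ) :
    (CoalGraph H φ hφ X x y).Reachable (CoalSet.basePt H φ hφ VX x y)
      (g • CoalSet.basePt H φ hφ VX x y) := by
  suffices hS : (CoalGraph H φ hφ X x y).componentStabilizer (adj_smul H φ hφ X x y)
      (CoalSet.basePt H φ hφ VX x y) = ⊤ from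
    SimpleGraph.mem_componentStabilizer.1 (hS ▸ Subgroup.mem_top g)
  refine HNNExtension.eq_top_of_of_mem_of_t_mem (fun a => ?_) ?_
  · rw [SimpleGraph.mem_componentStabilizer, CoalSet.basePt, CoalSet.of_smul_incl]
    exact reachable_incl H φ hφ X x y (hX _ _)
  · have h := (reachable_incl H φ hφ X x y (hX y x)).smul (adj_smul H φ hφ X x y)
      HNNExtension.t
    rw [CoalSet.t_smul_incl] at h
    exact h.symm

end CoalGraph

theorem coalescence_connected_general
    {A : Type*} [Group A] (H : Subgroup A) (φ : ↥H →* A) (hφ : Function.Injective φ)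
    {VX : Type*} [MulAction A VX] (X : SimpleGraph VX)
    (x y : VX) :
    X.Connected → (CoalGraph H φ hφ X x y).Connected := by
  intro hX
  refine SimpleGraph.connected_iff_exists_forall_reachable _ |>.2
    ⟨CoalSet.basePt H φ hφ VX x y, fun u => ?_⟩
  obtain ⟨g, s, rfl⟩ := CoalSet.exists_smul_incl H φ hφ x y u
  exact (CoalGraph.reachable_basePt_smul_basePt H φ hφ X x y hX.preconnected g).trans
    ((CoalGraph.reachable_incl H φ hφ X x y (hX.preconnected y s)).smul
      (CoalGraph.adj_smul H φ hφ X x y) g)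

/-- Let `H ≤ A`, `φ : H → A` a monomorphism, `G = A∗_φ`.  Let `X` be an
`A`-graph and `x, y` vertices in different `A`-orbits with `A_x = H` and `A_y = φ(H)`.
If `X` is connected then the `φ`-coalescence `Z` of `G ×_A X` w.r.t. `(x, y)` is a
connected graph. -/
theorem coalescence_connected
    {A : Type*} [Group A] (H : Subgroup A) (φ : ↥H →* A) (hφ : Function.Injective φ)
    {VX : Type*} [MulAction A VX] (X : SimpleGraph VX)
    (hX : ∀ (g : A) (a b : VX), X.Adj a b → X.Adj (g • a) (g • b))
    (x y : VX)
    (horb : y ∉ MulAction.orbit A x)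
    (hsx : MulAction.stabilizer A x = H)
    (hsy : MulAction.stabilizer A y = φ.range) :
    X.Connected → (CoalGraph H φ hφ X x y).Connected :=
  coalescence_connected_general H φ hφ X x y
end
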